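/- On a nearly cosymplectic manifold, for every tangent vector X in the horizontal distribution F = ker η, the bracket [X, θX] vanishes (when X is extended so that the projected connection derivative vanishes at the point); equivalently, ∇_X(θX) - ∇_{θX} X is proportional to neither part and is zero at such a point. -/

import Mathlib

/-- Abstract algebraic model of a nearly cosymplectic (almost contact metric)
manifold: `A` plays the role of the algebra of smooth functions, `V` of the
module of vector fields, `D` of the directional derivative, `g` of the metric,
`nabla` of the Levi-Civita connection, `θ` of the structure tensor and `ξ` of
the characteristic (Reeb) unit vector field, with `η X = g X ξ`. -/
structure NearlyCosymplectic where
  A : Type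
  V : Type
  [ringA : CommRing A]
  [algA : Algebra ℝ A]
  [grpV : AddCommGroup V]
  [modV : Module A V]
  /-- directional derivative of functions along a vector field -/
  D : V → A → A
  D_addl : ∀ X Y f, D (X + Y) f = D X f + D Y f
  D_smull : ∀ (f : A) (X : V) (h : A), D (f • X) h = f * D X h
  D_addr : ∀ (X : V) (f h : A), D X (f + h) = D X f + D X h
  D_mul : ∀ (X : V) (f h : A), D X (f * h) = D X f * h + f * D X h
  /-- Lie bracket of vector fields -/
  bracket : V → V → V
  bracket_D : ∀ X Y f, D (bracket X Y) f = D X (D Y f) - D Y (D X f)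
  /-- the Riemannian metric -/
  g : V → V → A
  g_symm : ∀ X Y, g X Y = g Y X
  g_addl : ∀ X Y Z, g (X + Y) Z = g X Z + g Y Z
  g_smull : ∀ (f : A) X Y, g (f • X) Y = f * g X Y
  /-- the Levi-Civita connection -/
  nabla : V → V → V
  nabla_addl : ∀ X Y Z, nabla (X + Y) Z = nabla X Z + nabla Y Z
  nabla_smull : ∀ (f : A) X Y, nabla (f • X) Y = f • nabla X Y
  nabla_addr : ∀ X Y Z, nabla X (Y + Z) = nabla X Y + nabla X Z
  nabla_leibniz : ∀ (X : V) (f : A) (Y : V),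
    nabla X (f • Y) = D X f • Y + f • nabla X Y
  metric_compat : ∀ X Y Z, D X (g Y Z) = g (nabla X Y) Z + g Y (nabla X Z)
  torsion_free : ∀ X Y, nabla X Y - nabla Y X = bracket X Y
  /-- the structure (1,1)-tensor θ -/
  θ : V → V
  θ_add : ∀ X Y, θ (X + Y) = θ X + θ Y
  θ_smul : ∀ (f : A) X, θ (f • X) = f • θ X
  /-- the characteristic vector field ξ -/
  ξ : V
  /-- ξ is a unit vector field (and η(ξ)=1, with η X = g X ξ) -/
  ξ_unit : g ξ ξ = 1
  /-- θ² = -Id + η ⊗ ξ -/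
  θ_sq : ∀ X, θ (θ X) = -X + g X ξ • ξ
  /-- metric compatibility of the almost contact structure -/
  θ_compat : ∀ X Y, g (θ X) (θ Y) = g X Y - g X ξ * g Y ξ
  /-- the nearly cosymplectic condition (∇_X θ)(Y) + (∇_Y θ)(X) = 0 -/
  nearly : ∀ X Y,
    (nabla X (θ Y) - θ (nabla X Y)) + (nabla Y (θ X) - θ (nabla Y X)) = 0

attribute [instance] NearlyCosymplectic.ringA NearlyCosymplectic.algA
  NearlyCosymplectic.grpV NearlyCosymplectic.modV

namespace NearlyCosymplectic

variable (M : NearlyCosymplectic)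

/-- the covariant derivative (∇_X θ)(Y) -/
def nablaθ (X Y : M.V) : M.V := M.nabla X (M.θ Y) - M.θ (M.nabla X Y)

/-- the Riemann curvature operator R(X,Y)Z = [∇_X,∇_Y]Z - ∇_{[X,Y]}Z -/
def R (X Y Z : M.V) : M.V :=
  M.nabla X (M.nabla Y Z) - M.nabla Y (M.nabla X Z) - M.nabla (M.bracket X Y) Z

/-- the second covariant derivative (∇²_{X,Y} θ)(Z) -/
def nabla2θ (X Y Z : M.V) : M.V :=
  M.nabla X (M.nablaθ Y Z) - M.nablaθ (M.nabla X Y) Z - M.nablaθ Y (M.nabla X Z)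

end NearlyCosymplectic

/-!
Write `a Y = η(∇_Y X)` and `c = η(θξ)`, so that `θξ = c ξ` and `c² = 0`. Pairing the nearly
cosymplectic identity `(∇_{θX} θ) ξ + (∇_ξ θ)(θX) = 0` with `θX` gives `a(θX) = c η(∇_{θX} θX)`,
and the `ξ`-component of `(∇_X θ)(θX) + (∇_{θX} θ) X = 0` gives `η(∇_{θX} θX) = a X + c a(θX)`;
hence `a(θX) = c a X`. As `(∇_X θ) X = 0`, the hypothesis `∇X ∈ A ξ` yields
`[X, θX] = ∇_X θX - ∇_{θX} X = θ(a X • ξ) - a(θX) • ξ = (a X c - c a X) ξ = 0`.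
-/

theorem eq_zero_of_add_self_eq_zero {R N : Type*} [CommRing R] [Algebra ℝ R]
    [AddCommGroup N] [Module R N] {z : N} (h : z + z = 0) : z = 0 :=
  calc z = (algebraMap ℝ R 2⁻¹ * 2) • z := by
        rw [← map_ofNat (algebraMap ℝ R) 2, ← map_mul]; norm_num
    _ = algebraMap ℝ R 2⁻¹ • (z + z) := by rw [mul_smul, two_smul]
    _ = 0 := by rw [h, smul_zero]

namespace NearlyCosymplectic

variable (M : NearlyCosymplectic)

lemma D_zero (X : M.V) : M.D X 0 = 0 :=
  map_zero (AddMonoidHom.mk' (M.D X) (M.D_addr X))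

lemma g_zerol (Y : M.V) : M.g 0 Y = 0 :=
  map_zero (AddMonoidHom.mk' (M.g · Y) (M.g_addl · · Y))

lemma g_negl (X Y : M.V) : M.g (-X) Y = -M.g X Y :=
  map_neg (AddMonoidHom.mk' (M.g · Y) (M.g_addl · · Y)) X

lemma g_subl (X Y Z : M.V) : M.g (X - Y) Z = M.g X Z - M.g Y Z :=
  map_sub (AddMonoidHom.mk' (M.g · Z) (M.g_addl · · Z)) X Y

lemma g_negr (X Y : M.V) : M.g X (-Y) = -M.g X Y := by
  rw [M.g_symm, g_negl, M.g_symm]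

lemma θ_neg (X : M.V) : M.θ (-X) = -M.θ X :=
  map_neg (AddMonoidHom.mk' M.θ M.θ_add) X

lemma nabla_negr (X Y : M.V) : M.nabla X (-Y) = -M.nabla X Y :=
  map_neg (AddMonoidHom.mk' (M.nabla X) (M.nabla_addr X)) Y

/-- In a genuine almost contact manifold `θξ = 0`; the axioms here only give
`θξ = ηθξ • ξ` with `ηθξ * ηθξ = 0`. -/
def ηθξ : M.A := M.g (M.θ M.ξ) M.ξ

lemma smul_θ_ξ (Y : M.V) : M.g Y M.ξ • M.θ M.ξ = M.g (M.θ Y) M.ξ • M.ξ := by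
  have h := M.θ_sq (M.θ Y)
  rw [M.θ_sq Y, M.θ_add, θ_neg, M.θ_smul] at h
  exact add_left_cancel h

lemma θ_ξ : M.θ M.ξ = M.ηθξ • M.ξ := by
  have h := M.smul_θ_ξ M.ξ
  rwa [M.ξ_unit, one_smul] at h

lemma g_θ_ξ (Y : M.V) : M.g (M.θ Y) M.ξ = M.g Y M.ξ * M.ηθξ := by
  have h := congrArg (M.g · M.ξ) (M.smul_θ_ξ Y)
  simp only [M.g_smull, θ_ξ, M.ξ_unit, mul_one] at h
  exact h.symm

lemma ηθξ_mul_self : M.ηθξ * M.ηθξ = 0 := by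
  have h := M.θ_compat M.ξ M.ξ
  rw [θ_ξ, M.g_smull, M.g_symm, M.g_smull, M.ξ_unit] at h
  linear_combination h

lemma nablaθ_add_nablaθ_swap (X Y : M.V) : M.nablaθ X Y + M.nablaθ Y X = 0 :=
  M.nearly X Y

lemma nablaθ_self (X : M.V) : M.nablaθ X X = 0 :=
  eq_zero_of_add_self_eq_zero (R := M.A) (M.nablaθ_add_nablaθ_swap X X)

lemma nabla_θ_self (X : M.V) : M.nabla X (M.θ X) = M.θ (M.nabla X X) :=
  sub_eq_zero.mp (M.nablaθ_self X)

section Horizontal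

variable {M} {X : M.V} (hX : M.g X M.ξ = 0)
include hX

lemma θ_θ_of_horizontal : M.θ (M.θ X) = -X := by
  rw [M.θ_sq, hX, zero_smul, add_zero]

lemma g_θ_ξ_of_horizontal : M.g (M.θ X) M.ξ = 0 := by
  rw [g_θ_ξ, hX, zero_mul]

lemma g_θ_θ_of_horizontal (W : M.V) : M.g (M.θ W) (M.θ X) = M.g W X := by
  rw [M.θ_compat, hX, mul_zero, sub_zero]

lemma g_self_θ_of_horizontal : M.g X (M.θ X) = 0 := by
  have h := g_θ_θ_of_horizontal (g_θ_ξ_of_horizontal hX) X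
  rw [θ_θ_of_horizontal hX, g_negr, M.g_symm] at h
  exact eq_zero_of_add_self_eq_zero (R := M.A) (by linear_combination -h)

lemma g_nabla_ξ_of_horizontal (Y : M.V) :
    M.g X (M.nabla Y M.ξ) = -M.g (M.nabla Y X) M.ξ := by
  have h := M.metric_compat Y X M.ξ
  rw [hX, D_zero] at h
  linear_combination -h

lemma nablaθ_θ_of_horizontal : M.nablaθ X (M.θ X) = -M.g (M.nabla X X) M.ξ • M.ξ := by
  rw [nablaθ, θ_θ_of_horizontal hX, nabla_negr, nabla_θ_self, M.θ_sq, neg_smul]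
  abel

lemma g_nablaθ_ξ_θ_of_horizontal (Y : M.V) :
    M.g (M.nablaθ Y M.ξ) (M.θ X) =
      M.ηθξ * M.g (M.nabla Y M.ξ) (M.θ X) - M.g (M.nabla Y M.ξ) X := by
  rw [nablaθ, θ_ξ, M.nabla_leibniz, g_subl, M.g_addl, M.g_smull, M.g_smull, M.g_symm M.ξ,
    g_θ_ξ_of_horizontal hX, g_θ_θ_of_horizontal hX, mul_zero, zero_add]

lemma g_nablaθ_θ_θ_of_horizontal (Y : M.V) : M.g (M.nablaθ Y (M.θ X)) (M.θ X) = 0 := by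
  have h := M.metric_compat Y X (M.θ X)
  rw [g_self_θ_of_horizontal hX, D_zero, M.g_symm X] at h
  rw [nablaθ, θ_θ_of_horizontal hX, nabla_negr, g_subl, g_negl,
    g_θ_θ_of_horizontal hX]
  linear_combination h

lemma g_nabla_θ_left_ξ_of_horizontal :
    M.g (M.nabla (M.θ X) X) M.ξ = M.ηθξ * M.g (M.nabla (M.θ X) (M.θ X)) M.ξ := by
  have h := congrArg (M.g · (M.θ X)) (M.nablaθ_add_nablaθ_swap (M.θ X) M.ξ)
  simp only [M.g_addl, g_zerol, g_nablaθ_ξ_θ_of_horizontal hX,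
    g_nablaθ_θ_θ_of_horizontal hX] at h
  rw [M.g_symm _ (M.θ X), M.g_symm _ X, g_nabla_ξ_of_horizontal (g_θ_ξ_of_horizontal hX),
    g_nabla_ξ_of_horizontal hX] at h
  linear_combination h

lemma g_nabla_θ_θ_ξ_of_horizontal :
    M.g (M.nabla (M.θ X) (M.θ X)) M.ξ =
      M.g (M.nabla X X) M.ξ + M.ηθξ * M.g (M.nabla (M.θ X) X) M.ξ := by
  have h := congrArg (M.g · M.ξ) (M.nablaθ_add_nablaθ_swap X (M.θ X))
  simp only [nablaθ_θ_of_horizontal hX] at h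
  rw [nablaθ, M.g_addl, g_subl, M.g_smull, M.ξ_unit, g_θ_ξ, g_zerol] at h
  linear_combination h

lemma g_nabla_θ_left_ξ_eq_ηθξ_mul :
    M.g (M.nabla (M.θ X) X) M.ξ = M.ηθξ * M.g (M.nabla X X) M.ξ := by
  rw [g_nabla_θ_left_ξ_of_horizontal hX, g_nabla_θ_θ_ξ_of_horizontal hX]
  linear_combination M.g (M.nabla (M.θ X) X) M.ξ * M.ηθξ_mul_self

end Horizontal

end NearlyCosymplectic

open NearlyCosymplectic

/-- For a horizontal vector field X whose projected covariant derivative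
∇̄ X (the F-component of ∇X) vanishes, the bracket [X, θX] is zero. -/
theorem stmt4 (M : NearlyCosymplectic) (X : M.V)
    (hX : M.g X M.ξ = 0)
    (hpar : ∀ Y : M.V, M.nabla Y X - M.g (M.nabla Y X) M.ξ • M.ξ = 0) :
    M.bracket X (M.θ X) = 0 := by
  have hξ : ∀ Y : M.V, M.nabla Y X = M.g (M.nabla Y X) M.ξ • M.ξ :=
    fun Y => sub_eq_zero.mp (hpar Y)
  rw [← M.torsion_free, nabla_θ_self, hξ (M.θ X), g_nabla_θ_left_ξ_eq_ηθξ_mul hX]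
  nth_rw 1 [hξ X]
  rw [M.θ_smul, θ_ξ, smul_smul, mul_comm, sub_self]
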